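/- arXiv:1902.07111 — 6 statements merged into one kernel-verified Lean document; each statement's English description precedes it below -/
import Mathlib

section
/- If b_0 > 0 and b_{k+1}² = b_k² + γ·a_k for non-negative reals a_k with a_0 > 0 and γ > 0, then for every k, ∑_{t=0}^{k} a_t / b_{t+1} ≤ (2/γ)·b_{k+1}. In particular, ∑_{t=0}^{k} a_t / b_{t+1} ≤ (2/γ)·√(γ·∑_{ℓ=0}^{k} a_ℓ + b_0²). -/
open Finset

theorem stmt_2 (γ : ℝ) (hγ : 0 < γ) (a b : ℕ → ℝ)
    (ha : ∀ t, 0 ≤ a t) (ha0 : 0 < a 0) (hb : ∀ t, 0 < b t)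
    (hrec : ∀ t, (b (t + 1)) ^ 2 = (b t) ^ 2 + γ * a t) :
    ∀ k, (∑ t ∈ Finset.range (k + 1), a t / b (t + 1) ≤ (2 / γ) * b (k + 1)) ∧
      (∑ t ∈ Finset.range (k + 1), a t / b (t + 1) ≤
        (2 / γ) * Real.sqrt (γ * ∑ ℓ ∈ Finset.range (k + 1), a ℓ + (b 0) ^ 2)) := by
  have hmono : ∀ t, b t ≤ b (t + 1) := by
    intro t
    have h : (b t) ^ 2 ≤ (b (t + 1)) ^ 2 := by
      rw [hrec t]; nlinarith [ha t]
    nlinarith [hb t, hb (t + 1)]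
  have hterm : ∀ t, a t / b (t + 1) ≤ (2 / γ) * (b (t + 1) - b t) := by
    intro t
    rw [div_le_iff₀ (hb (t + 1))]
    have key : γ * a t ≤ 2 * (b (t + 1) - b t) * b (t + 1) := by
      nlinarith [hrec t, hmono t, hb t, hb (t + 1)]
    calc a t = (γ * a t) / γ := by field_simp
      _ ≤ (2 * (b (t + 1) - b t) * b (t + 1)) / γ := by gcongr
      _ = 2 / γ * (b (t + 1) - b t) * b (t + 1) := by ring
  have hsum : ∀ k, ∑ t ∈ Finset.range (k + 1), a t / b (t + 1) ≤
      (2 / γ) * (b (k + 1) - b 0) := by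
    intro k
    induction k with
    | zero => simpa using hterm 0
    | succ n ih =>
        rw [Finset.sum_range_succ]
        have := hterm (n + 1)
        linarith
  have hsq : ∀ k, (b (k + 1)) ^ 2 = γ * ∑ ℓ ∈ Finset.range (k + 1), a ℓ + (b 0) ^ 2 := by
    intro k
    induction k with
    | zero => rw [Finset.sum_range_one, hrec 0]; ring
    | succ n ih =>
        rw [Finset.sum_range_succ, hrec (n + 1), ih]; ring
  intro k
  have h1 : ∑ t ∈ Finset.range (k + 1), a t / b (t + 1) ≤ (2 / γ) * b (k + 1) := by
    have := hsum k
    have h0 : 0 < b 0 := hb 0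
    have hγ' : 0 < 2 / γ := by positivity
    nlinarith
  refine ⟨h1, ?_⟩
  have : Real.sqrt (γ * ∑ ℓ ∈ Finset.range (k + 1), a ℓ + (b 0) ^ 2) = b (k + 1) := by
    rw [← hsq k, Real.sqrt_sq (le_of_lt (hb (k + 1)))]
  rw [this]; exact h1
end

section
/- Let b_0 > 0 and b_{t+1}² = b_t² + β·a_t² for non-negative reals a_t and β > 0. Then for every k, ∑_{t=0}^{k} a_t²/b_{t+1}² ≤ (1/β)·(1 + log(b_{k+1}²/b_0²)). -/
/-! Since `β a_t² = b_{t+1}² - b_t²`, each summand times `β` equals `1 - b_t² / b_{t+1}²`, which is at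
most `log b_{t+1}² - log b_t²` because `1 - 1/x ≤ log x`. Summing telescopes to `log (b_{k+1}² / b_0²)`. -/

open Finset Real

lemma one_sub_div_le_log_sub_log {x y : ℝ} (hx : 0 < x) (hy : 0 < y) :
    1 - x / y ≤ log y - log x := by
  rw [← log_div hy.ne' hx.ne']
  simpa only [inv_div] using one_sub_inv_le_log_of_pos (div_pos hy hx)

lemma sum_range_one_sub_div_le_log_div {s : ℕ → ℝ} (hs : ∀ t, 0 < s t) (n : ℕ) :
    ∑ t ∈ range n, (1 - s t / s (t + 1)) ≤ log (s n / s 0) :=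
  calc ∑ t ∈ range n, (1 - s t / s (t + 1))
      ≤ ∑ t ∈ range n, (log (s (t + 1)) - log (s t)) :=
        sum_le_sum fun t _ => one_sub_div_le_log_sub_log (hs t) (hs (t + 1))
    _ = log (s n / s 0) := by
        rw [sum_range_sub (fun t => log (s t)), log_div (hs n).ne' (hs 0).ne']

theorem stmt_3_general (β : ℝ) (hβ : 0 < β) (a b : ℕ → ℝ)
    (hb : ∀ t, 0 < b t)
    (hrec : ∀ t, (b (t + 1)) ^ 2 = (b t) ^ 2 + β * (a t) ^ 2) :
    ∀ k, ∑ t ∈ Finset.range (k + 1), (a t) ^ 2 / (b (t + 1)) ^ 2 ≤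
      (1 / β) * (1 + Real.log ((b (k + 1)) ^ 2 / (b 0) ^ 2)) := by
  intro k
  have hsq : ∀ t, 0 < b t ^ 2 := fun t => pow_pos (hb t) 2
  have hterm : ∀ t, β * (a t ^ 2 / b (t + 1) ^ 2) = 1 - b t ^ 2 / b (t + 1) ^ 2 := by
    intro t
    rw [mul_div_assoc', eq_sub_iff_add_eq, ← add_div, div_eq_one_iff_eq (hsq (t + 1)).ne',
      hrec t, add_comm]
  have hlog := sum_range_one_sub_div_le_log_div hsq (k + 1)
  simp only [← hterm, ← mul_sum] at hlog
  rw [one_div_mul_eq_div, le_div_iff₀ hβ, mul_comm]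
  linarith

theorem stmt_3 (β : ℝ) (hβ : 0 < β) (a b : ℕ → ℝ)
    (ha : ∀ t, 0 ≤ a t) (hb : ∀ t, 0 < b t)
    (hrec : ∀ t, (b (t + 1)) ^ 2 = (b t) ^ 2 + β * (a t) ^ 2) :
    ∀ k, ∑ t ∈ Finset.range (k + 1), (a t) ^ 2 / (b (t + 1)) ^ 2 ≤
      (1 / β) * (1 + Real.log ((b (k + 1)) ^ 2 / (b 0) ^ 2)) :=
  stmt_3_general β hβ a b hb hrec
end

section
/- Suppose a non-negative sequence r_k satisfies r_{k+1} ≤ (1 − c/(4·b_{k+1}))·r_k for all k ≥ 0, where c > 0 and b_k > 0 is non-decreasing. Then for every k, ∑_{t=0}^{k} r_t/b_{t+1} ≤ (4/c)·r_0. -/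
open Finset

theorem stmt_6 (c : ℝ) (hc : 0 < c) (r b : ℕ → ℝ)
    (hr : ∀ k, 0 ≤ r k) (hb : ∀ k, 0 < b k) (hbmono : Monotone b)
    (hfac : ∀ k, 0 ≤ 1 - c / (4 * b (k + 1)))
    (hrec : ∀ k, r (k + 1) ≤ (1 - c / (4 * b (k + 1))) * r k) :
    ∀ k, ∑ t ∈ Finset.range (k + 1), r t / b (t + 1) ≤ (4 / c) * r 0 := by
  intro k
  have key : ∀ t, c / 4 * (r t / b (t + 1)) ≤ r t - r (t + 1) := by
    intro t
    have hb' := hb (t + 1)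
    have h1 := hrec t
    have heq : (1 - c / (4 * b (t + 1))) * r t = r t - c / 4 * (r t / b (t + 1)) := by
      field_simp
    rw [heq] at h1
    linarith
  have hsum : c / 4 * ∑ t ∈ Finset.range (k + 1), r t / b (t + 1) ≤ r 0 - r (k + 1) := by
    rw [Finset.mul_sum]
    calc ∑ t ∈ Finset.range (k+1), c/4 * (r t / b (t+1))
        ≤ ∑ t ∈ Finset.range (k+1), (r t - r (t+1)) :=
          Finset.sum_le_sum (fun t _ => key t)
      _ = r 0 - r (k+1) := Finset.sum_range_sub' (fun t => r t) (k+1)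
  have hlast := hr (k + 1)
  rw [div_mul_eq_mul_div, le_div_iff₀ hc]
  nlinarith
end

section
/- Suppose b_0 > 0 and b_{k+1}² = b_k² + γ·r_k where γ > 0, and suppose the non-negative sequence r_k satisfies r_{k+1} ≤ (1 − c/(4·b_{k+1}))·r_k with c > 0 and each factor non-negative. Then for all k, b_k ≤ b_0 + (4γ/c)·r_0. -/
/-!
The potential `b k + (4γ/c) r k` is non-increasing: one step raises `b` by
`b (k+1) - b k = γ r k / (b (k+1) + b k) ≤ γ r k / b (k+1)`, while the contraction of `r`
lowers `(4γ/c) r` by at least `(4γ/c) · c r k / (4 b (k+1)) = γ r k / b (k+1)`.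
Since `r k ≥ 0`, `b k` is bounded by the initial value of the potential.
-/

lemma le_add_div_of_sq_eq_sq_add {b b' x : ℝ} (hb : 0 ≤ b) (hb' : 0 < b') (hx : 0 ≤ x)
    (h : b' ^ 2 = b ^ 2 + x) : b' ≤ b + x / b' := by
  have hle : b ≤ b' := by nlinarith
  rw [← sub_le_iff_le_add', le_div_iff₀ hb']
  nlinarith

lemma add_mul_le_add_mul_of_sq_eq_of_le_mul {γ c b b' r r' : ℝ} (hγ : 0 ≤ γ) (hc : 0 < c)
    (hb : 0 ≤ b) (hb' : 0 < b') (hr : 0 ≤ r) (hsq : b' ^ 2 = b ^ 2 + γ * r)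
    (hr' : r' ≤ (1 - c / (4 * b')) * r) :
    b' + 4 * γ / c * r' ≤ b + 4 * γ / c * r := by
  have hb_step : b' ≤ b + γ * r / b' :=
    le_add_div_of_sq_eq_sq_add hb hb' (mul_nonneg hγ hr) hsq
  have hr_step : 4 * γ / c * r' ≤ 4 * γ / c * r - γ * r / b' := calc
    4 * γ / c * r' ≤ 4 * γ / c * ((1 - c / (4 * b')) * r) := by gcongr
    _ = 4 * γ / c * r - γ * r / b' := by field_simp
  linarith

theorem stmt_7_general (γ c : ℝ) (hγ : 0 < γ) (hc : 0 < c) (r b : ℕ → ℝ)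
    (hr : ∀ k, 0 ≤ r k) (hb : ∀ k, 0 < b k)
    (hbrec : ∀ k, (b (k + 1)) ^ 2 = (b k) ^ 2 + γ * r k)
    (hrrec : ∀ k, r (k + 1) ≤ (1 - c / (4 * b (k + 1))) * r k) :
    ∀ k, b k ≤ b 0 + (4 * γ / c) * r 0 := by
  have hpotential : Antitone fun k ↦ b k + 4 * γ / c * r k :=
    antitone_nat_of_succ_le fun k ↦ add_mul_le_add_mul_of_sq_eq_of_le_mul hγ.le hc
      (hb k).le (hb (k + 1)) (hr k) (hbrec k) (hrrec k)
  intro k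
  have hr_term : 0 ≤ 4 * γ / c * r k := mul_nonneg (by positivity) (hr k)
  linarith [hpotential (Nat.zero_le k)]

theorem stmt_7 (γ c : ℝ) (hγ : 0 < γ) (hc : 0 < c) (r b : ℕ → ℝ)
    (hr : ∀ k, 0 ≤ r k) (hb0 : 0 < b 0) (hb : ∀ k, 0 < b k)
    (hbrec : ∀ k, (b (k + 1)) ^ 2 = (b k) ^ 2 + γ * r k)
    (hfac : ∀ k, 0 ≤ 1 - c / (4 * b (k + 1)))
    (hrrec : ∀ k, r (k + 1) ≤ (1 - c / (4 * b (k + 1))) * r k) :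
    ∀ k, b k ≤ b 0 + (4 * γ / c) * r 0 :=
  stmt_7_general γ c hγ hc r b hr hb hbrec hrrec
end

section
/- Suppose e_{k+1} = (I − η(H − H⊥))e_k − E₂ holds for vectors e_k ∈ ℝⁿ, where H is symmetric with λ₀/2 ≤ λ_min(H) and ‖H‖ ≤ Λ, ‖H⊥‖ ≤ ρ, ‖E₂‖ ≤ σ‖e_k‖, and η ≤ 1/Λ. Then ‖e_{k+1}‖² ≤ (1 − ηλ₀(1 − ηΛ/2) + 2ηρ(1 + ηρ/2) + σ(2ηΛ + 2ηρ + σ + 2) + 2η²Λρ)·‖e_k‖². -/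
/-!
Split `e' = (e - η H e) + (η H⊥ e - E₂)`. For the gradient-step part, positivity of `H` and
Cauchy–Schwarz for the form `⟪x, H y⟫` give `‖H e‖² ≤ Λ ⟪e, H e⟫`, so
`‖e - η H e‖² ≤ ‖e‖² - η (2 - ηΛ) ⟪e, H e⟫ ≤ (1 - ηλ₀(1 - ηΛ/2)) ‖e‖²`, a contraction since
`ηΛ ≤ 1`. The second part has norm at most `(ηρ + σ) ‖e‖`, and squaring the triangle inequality
bounds `‖e'‖²` by `(1 - ηλ₀(1 - ηΛ/2) + 2(ηρ + σ) + (ηρ + σ)²) ‖e‖²`, which is at most the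
stated constant.
-/

open scoped RealInnerProductSpace

namespace ContinuousLinearMap.IsPositive

variable {E : Type*} [NormedAddCommGroup E] [InnerProductSpace ℝ E] {T : E →L[ℝ] E}

theorem norm_apply_sq_le (hT : T.IsPositive) (x : E) : ‖T x‖ ^ 2 ≤ ‖T‖ * ⟪x, T x⟫ := by
  have hcs := LinearMap.BilinForm.apply_mul_apply_le_of_forall_zero_le
    ((innerₗ E).compl₂ (T : E →ₗ[ℝ] E)) hT.inner_nonneg_right x (T x)
  simp only [LinearMap.compl₂_apply, innerₗ_apply_apply, ContinuousLinearMap.coe_coe] at hcs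
  rw [← hT.inner_left_eq_inner_right, real_inner_self_eq_norm_sq] at hcs
  have hTT : ⟪T x, T (T x)⟫ ≤ ‖T‖ * ‖T x‖ ^ 2 :=
    calc ⟪T x, T (T x)⟫ ≤ ‖T x‖ * ‖T (T x)‖ := real_inner_le_norm _ _
      _ ≤ ‖T x‖ * (‖T‖ * ‖T x‖) := by gcongr; exact T.le_opNorm _
      _ = ‖T‖ * ‖T x‖ ^ 2 := by ring
  rcases (sq_nonneg ‖T x‖).eq_or_lt with h0 | h0
  · rw [← h0]
    exact mul_nonneg (norm_nonneg T) (hT.inner_nonneg_right x)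
  · have := hcs.trans (mul_le_mul_of_nonneg_left hTT (hT.inner_nonneg_right x))
    nlinarith

theorem norm_sub_smul_apply_sq_le (hT : T.IsPositive) {x : E} {μ Λ η : ℝ}
    (hμ : μ * ‖x‖ ^ 2 ≤ ⟪x, T x⟫) (hΛ : ‖T‖ ≤ Λ) (hη : 0 ≤ η) (hηΛ : η * Λ ≤ 2) :
    ‖x - η • T x‖ ^ 2 ≤ (1 - η * (2 - η * Λ) * μ) * ‖x‖ ^ 2 := by
  have hexpand : ‖x - η • T x‖ ^ 2 = ‖x‖ ^ 2 - 2 * η * ⟪x, T x⟫ + η ^ 2 * ‖T x‖ ^ 2 := by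
    rw [norm_sub_sq_real, real_inner_smul_right, norm_smul, Real.norm_of_nonneg hη]
    ring
  have hTx : ‖T x‖ ^ 2 ≤ Λ * ⟪x, T x⟫ :=
    (hT.norm_apply_sq_le x).trans (by gcongr; exact hT.inner_nonneg_right x)
  have hstep : 0 ≤ η * (2 - η * Λ) := mul_nonneg hη (by linarith)
  calc ‖x - η • T x‖ ^ 2 ≤ ‖x‖ ^ 2 - η * (2 - η * Λ) * ⟪x, T x⟫ := by
        rw [hexpand]; nlinarith [mul_le_mul_of_nonneg_left hTx (sq_nonneg η)]
    _ ≤ (1 - η * (2 - η * Λ) * μ) * ‖x‖ ^ 2 := by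
        nlinarith [mul_le_mul_of_nonneg_left hμ hstep]

end ContinuousLinearMap.IsPositive

theorem norm_add_sq_le_of_norm_sq_le {E : Type*} [SeminormedAddCommGroup E] {u w : E}
    {r a c : ℝ} (hr : 0 ≤ r) (hu : ‖u‖ ^ 2 ≤ a * r ^ 2) (ha : a ≤ 1) (hw : ‖w‖ ≤ c * r) :
    ‖u + w‖ ^ 2 ≤ (a + 2 * c + c ^ 2) * r ^ 2 := by
  have hur : ‖u‖ ≤ r :=
    (pow_le_pow_iff_left₀ (norm_nonneg u) hr two_ne_zero).1 (hu.trans (by nlinarith))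
  have hcr : 0 ≤ c * r := (norm_nonneg w).trans hw
  calc ‖u + w‖ ^ 2 ≤ (‖u‖ + c * r) ^ 2 :=
        pow_le_pow_left₀ (norm_nonneg _) ((norm_add_le u w).trans (by linarith)) 2
    _ = ‖u‖ ^ 2 + 2 * (c * r) * ‖u‖ + (c * r) ^ 2 := by ring
    _ ≤ a * r ^ 2 + 2 * (c * r) * r + (c * r) ^ 2 := by gcongr
    _ = (a + 2 * c + c ^ 2) * r ^ 2 := by ring

theorem stmt_18_general (n : ℕ) (H Hp : Matrix (Fin n) (Fin n) ℝ)
    (hH : H.IsHermitian)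
    (lam0 Lam ρ σ η : ℝ) (hlam0 : 0 < lam0) (hρ : 0 ≤ ρ) (hσ : 0 ≤ σ)
    (hmin : ∀ v : EuclideanSpace ℝ (Fin n),
      lam0 / 2 * ‖v‖ ^ 2 ≤ (inner ℝ v (Matrix.toEuclideanCLM (𝕜 := ℝ) H v) : ℝ))
    (hLam : ‖Matrix.toEuclideanCLM (𝕜 := ℝ) H‖ ≤ Lam)
    (hHpn : ‖Matrix.toEuclideanCLM (𝕜 := ℝ) Hp‖ ≤ ρ)
    (hη : 0 < η) (hηLam : η * Lam ≤ 1)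
    (e e' E2 : EuclideanSpace ℝ (Fin n))
    (hE2 : ‖E2‖ ≤ σ * ‖e‖)
    (hstep : e' = Matrix.toEuclideanCLM (𝕜 := ℝ)
      ((1 : Matrix (Fin n) (Fin n) ℝ) - η • (H - Hp)) e - E2) :
    ‖e'‖ ^ 2 ≤
      (1 - η * lam0 * (1 - η * Lam / 2) + 2 * η * ρ * (1 + η * ρ / 2)
        + σ * (2 * η * Lam + 2 * η * ρ + σ + 2) + 2 * η ^ 2 * Lam * ρ) * ‖e‖ ^ 2 := by
  set T := Matrix.toEuclideanCLM (𝕜 := ℝ) H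
  set P := Matrix.toEuclideanCLM (𝕜 := ℝ) Hp
  have hT : T.IsPositive :=
    ⟨Matrix.isSymmetric_toEuclideanLin_iff.mpr hH, fun v => by
      rw [ContinuousLinearMap.reApplyInnerSelf_apply, real_inner_comm]
      exact (mul_nonneg (by positivity) (sq_nonneg _)).trans (hmin v)⟩
  have hsplit : e' = (e - η • T e) + (η • P e - E2) := by
    rw [hstep, map_sub, map_smul, map_sub, map_one]
    simp only [_root_.sub_apply, _root_.smul_apply, one_apply_eq_self, smul_sub]
    abel
  have hdescent := hT.norm_sub_smul_apply_sq_le (hmin e) hLam hη.le (by linarith)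
  have hcontract : 1 - η * (2 - η * Lam) * (lam0 / 2) ≤ 1 := by
    have : 0 ≤ 2 - η * Lam := by linarith
    have : 0 ≤ η * (2 - η * Lam) * (lam0 / 2) := by positivity
    linarith
  have hperturb : ‖η • P e - E2‖ ≤ (η * ρ + σ) * ‖e‖ :=
    calc ‖η • P e - E2‖ ≤ η * ‖P e‖ + ‖E2‖ := by
          simpa only [norm_smul, Real.norm_of_nonneg hη.le] using norm_sub_le (η • P e) E2
      _ ≤ η * (ρ * ‖e‖) + σ * ‖e‖ := by gcongr; exact P.le_of_opNorm_le hHpn e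
      _ = (η * ρ + σ) * ‖e‖ := by ring
  have hLam0 : 0 ≤ Lam := (norm_nonneg T).trans hLam
  rw [hsplit]
  refine (norm_add_sq_le_of_norm_sq_le (norm_nonneg e) hdescent hcontract hperturb).trans ?_
  refine mul_le_mul_of_nonneg_right ?_ (sq_nonneg _)
  -- the stated constant exceeds `a + 2c + c²` by exactly `2σηΛ + 2η²Λρ`
  nlinarith [mul_nonneg (mul_nonneg hσ hη.le) hLam0, mul_nonneg (mul_nonneg (sq_nonneg η) hLam0) hρ]

theorem stmt_18 (n : ℕ) (H Hp : Matrix (Fin n) (Fin n) ℝ)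
    (hH : H.IsHermitian) (hHp : Hp.IsHermitian)
    (lam0 Lam ρ σ η : ℝ) (hlam0 : 0 < lam0) (hρ : 0 ≤ ρ) (hσ : 0 ≤ σ)
    (hmin : ∀ v : EuclideanSpace ℝ (Fin n),
      lam0 / 2 * ‖v‖ ^ 2 ≤ (inner ℝ v (Matrix.toEuclideanCLM (𝕜 := ℝ) H v) : ℝ))
    (hLam : ‖Matrix.toEuclideanCLM (𝕜 := ℝ) H‖ ≤ Lam)
    (hHpn : ‖Matrix.toEuclideanCLM (𝕜 := ℝ) Hp‖ ≤ ρ)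
    (hη : 0 < η) (hηLam : η * Lam ≤ 1)
    (e e' E2 : EuclideanSpace ℝ (Fin n))
    (hE2 : ‖E2‖ ≤ σ * ‖e‖)
    (hstep : e' = Matrix.toEuclideanCLM (𝕜 := ℝ)
      ((1 : Matrix (Fin n) (Fin n) ℝ) - η • (H - Hp)) e - E2) :
    ‖e'‖ ^ 2 ≤
      (1 - η * lam0 * (1 - η * Lam / 2) + 2 * η * ρ * (1 + η * ρ / 2)
        + σ * (2 * η * Lam + 2 * η * ρ + σ + 2) + 2 * η ^ 2 * Lam * ρ) * ‖e‖ ^ 2 :=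
  stmt_18_general n H Hp hH lam0 Lam ρ σ η hlam0 hρ hσ hmin hLam hHpn hη hηLam e e' E2 hE2 hstep
end

section
/- Let ε ∈ (0,1] and suppose a non-negative sequence a_0, a_1, ... and a sequence b_k defined by b_0 > 0, b_{k+1}² = b_k² + γ·a_k satisfies: whenever b_k ≥ L it holds that a_{k+1}² ≤ (1 − c/b_{k+1})·a_k² with 0 < c/b_{k+1} < 1, and b_k ≤ B for all k where B ≥ L. Then letting T₀ = ⌈(L² − b_0²)/(γ√ε)⌉ + 1, either min_{k < T₀} a_k² ≤ ε, or for all T ≥ T₀, a_T² ≤ exp(−(T − T₀)·c/B)·a_{T₀}². -/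
theorem stmt_19 (ε γ c L B : ℝ) (hε : 0 < ε) (hε1 : ε ≤ 1) (hγ : 0 < γ)
    (hc : 0 < c) (hL : 0 < L) (hBL : L ≤ B)
    (a b : ℕ → ℝ) (ha : ∀ k, 0 ≤ a k) (hb : ∀ k, 0 < b k)
    (hbrec : ∀ k, (b (k + 1)) ^ 2 = (b k) ^ 2 + γ * a k)
    (hsmall : ∀ k, c / b (k + 1) < 1)
    (hcontr : ∀ k, L ≤ b k → (a (k + 1)) ^ 2 ≤ (1 - c / b (k + 1)) * (a k) ^ 2)
    (hbound : ∀ k, b k ≤ B)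
    (T0 : ℕ) (hT0 : T0 = ⌈(L ^ 2 - (b 0) ^ 2) / (γ * Real.sqrt ε)⌉₊ + 1) :
    (∃ k < T0, (a k) ^ 2 ≤ ε) ∨
      ∀ T, T0 ≤ T →
        (a T) ^ 2 ≤ Real.exp (-((T : ℝ) - (T0 : ℝ)) * c / B) * (a T0) ^ 2 := by
  by_cases hmin : ∃ k < T0, (a k) ^ 2 ≤ ε
  · exact Or.inl hmin
  push_neg at hmin
  right
  have hse : 0 < Real.sqrt ε := Real.sqrt_pos.2 hε
  have hak : ∀ k < T0, Real.sqrt ε ≤ a k := by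
    intro k hk
    calc Real.sqrt ε ≤ Real.sqrt ((a k) ^ 2) := Real.sqrt_le_sqrt (hmin k hk).le
    _ = a k := Real.sqrt_sq (ha k)
  have hbg : ∀ n, n ≤ T0 → b 0 ^ 2 + n * (γ * Real.sqrt ε) ≤ b n ^ 2 := by
    intro n
    induction n with
    | zero => intro _; simp
    | succ m ih =>
      intro hn
      have hm := ih (Nat.le_of_succ_le hn)
      have hmlt : m < T0 := hn
      have h1 : γ * Real.sqrt ε ≤ γ * a m :=
        mul_le_mul_of_nonneg_left (hak m hmlt) hγ.le
      rw [hbrec m]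
      push_cast
      nlinarith
  have hstep : ∀ k, b k ≤ b (k + 1) := by
    intro k
    have h2 : b k ^ 2 ≤ b (k + 1) ^ 2 := by
      rw [hbrec]; nlinarith [mul_nonneg hγ.le (ha k)]
    nlinarith [hb k, hb (k + 1)]
  have hmono := monotone_nat_of_le_succ hstep
  have hT0pos : 1 ≤ T0 := by omega
  have hLb : ∀ k, T0 ≤ k → L ≤ b k := by
    intro k hk
    have h1 : b 0 ^ 2 + (T0 - 1 : ℕ) * (γ * Real.sqrt ε) ≤ b (T0 - 1) ^ 2 :=
      hbg _ (by omega)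
    have hceil : (L ^ 2 - (b 0) ^ 2) / (γ * Real.sqrt ε) ≤ ((T0 - 1 : ℕ) : ℝ) := by
      have heq : (T0 - 1 : ℕ) = ⌈(L ^ 2 - (b 0) ^ 2) / (γ * Real.sqrt ε)⌉₊ := by omega
      rw [heq]; exact Nat.le_ceil _
    have hpos : 0 < γ * Real.sqrt ε := mul_pos hγ hse
    have h3 : L ^ 2 - (b 0) ^ 2 ≤ ((T0 - 1 : ℕ) : ℝ) * (γ * Real.sqrt ε) := by
      rw [div_le_iff₀ hpos] at hceil; linarith
    have hL2 : L ^ 2 ≤ b (T0 - 1) ^ 2 := by linarith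
    have hLb1 : L ≤ b (T0 - 1) := by nlinarith [hb (T0 - 1)]
    exact hLb1.trans (hmono (by omega))
  intro T hT
  induction T, hT using Nat.le_induction with
  | base => simp
  | succ T hT ih =>
    have hc1 := hcontr T (hLb T hT)
    have hbB : c / B ≤ c / b (T + 1) := by
      gcongr
      · exact hb (T + 1)
      · exact hbound (T + 1)
    have hexp : 1 - c / b (T + 1) ≤ Real.exp (-(c / B)) := by
      calc 1 - c / b (T + 1) ≤ Real.exp (-(c / b (T + 1))) := by
            have := Real.add_one_le_exp (-(c / b (T + 1))); linarith
      _ ≤ Real.exp (-(c / B)) := Real.exp_le_exp.2 (by linarith)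
    calc (a (T + 1)) ^ 2 ≤ (1 - c / b (T + 1)) * (a T) ^ 2 := hc1
    _ ≤ Real.exp (-(c / B)) * (a T) ^ 2 :=
        mul_le_mul_of_nonneg_right hexp (sq_nonneg _)
    _ ≤ Real.exp (-(c / B)) * (Real.exp (-((T : ℝ) - (T0 : ℝ)) * c / B) * (a T0) ^ 2) :=
        mul_le_mul_of_nonneg_left ih (Real.exp_pos _).le
    _ = Real.exp (-(((T + 1 : ℕ) : ℝ) - (T0 : ℝ)) * c / B) * (a T0) ^ 2 := by
        rw [← mul_assoc, ← Real.exp_add]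
        congr 1
        push_cast
        ring
end
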